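/- arXiv:hep-th/9208047 — 6 statements merged into one kernel-verified Lean document; each statement's English description precedes it below -/
import Mathlib

section
/- Let V be a vector space over ℚ and let δ, ∇, d : V → V be linear maps satisfying δ∘∇ − ∇∘δ = d and d∘∇ = ∇∘d. If ω ∈ V satisfies δω = 0, then the elements χ_p := (1/p!) • ∇^p ω solve the full tower of descent equations: δχ_0 = 0 and δχ_p = d χ_{p−1} for every p ≥ 1. -/
lemma comm_pow {V : Type*} [AddCommGroup V] [Module ℚ V]
    (δ nabla d : Module.End ℚ V)
    (h1 : δ * nabla - nabla * δ = d) (h2 : d * nabla = nabla * d) :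
    ∀ n : ℕ, δ * nabla ^ (n + 1) - nabla ^ (n + 1) * δ
      = ((n + 1 : ℕ) : ℚ) • (d * nabla ^ n) := by
  intro n
  induction n with
  | zero => simpa using h1
  | succ k ih =>
    have hc : Commute d nabla := h2
    have hc2 : nabla ^ (k+1) * d = d * nabla ^ (k+1) := (hc.symm.pow_left (k+1)).eq
    have key : δ * nabla ^ (k + 2) - nabla ^ (k + 2) * δ
        = (δ * nabla ^ (k+1) - nabla ^ (k+1) * δ) * nabla
          + nabla ^ (k+1) * (δ * nabla - nabla * δ) := by
      rw [pow_succ, pow_succ]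
      noncomm_ring
    rw [key, ih, h1, hc2, smul_mul_assoc, mul_assoc, ← pow_succ]
    push_cast
    module

/-- Descent equations: if `δ∘∇ − ∇∘δ = d`, `d∘∇ = ∇∘d` and `δω = 0`, then the
elements `χ_p = (1/p!) • ∇^p ω` satisfy `δχ_0 = 0` and `δχ_p = d χ_{p-1}` for `p ≥ 1`. -/
theorem stmt_1 (V : Type*) [AddCommGroup V] [Module ℚ V]
    (δ nabla d : Module.End ℚ V)
    (h1 : δ * nabla - nabla * δ = d) (h2 : d * nabla = nabla * d)
    (ω : V) (hω : δ ω = 0) :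
    δ ((((0 : ℕ).factorial : ℚ))⁻¹ • (nabla ^ 0) ω) = 0 ∧
      ∀ p : ℕ, 1 ≤ p →
        δ (((p.factorial : ℚ))⁻¹ • (nabla ^ p) ω)
          = d ((((p - 1).factorial : ℚ))⁻¹ • (nabla ^ (p - 1)) ω) := by
  constructor
  · simpa using hω
  · rintro p hp
    obtain ⟨n, rfl⟩ := Nat.exists_eq_add_of_le hp
    rw [show 1 + n = n + 1 by ring]
    have key := congrArg (fun f : Module.End ℚ V => f ω) (comm_pow δ nabla d h1 h2 n)
    simp only [LinearMap.sub_apply, Module.End.mul_apply, LinearMap.smul_apply,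
      hω, map_zero, sub_zero] at key
    simp only [Nat.add_sub_cancel, map_smul, LinearMap.map_smul]
    rw [key, smul_smul]
    have hq : ((((n+1).factorial : ℕ) : ℚ))⁻¹ * (((n + 1 : ℕ)) : ℚ) = ((n.factorial : ℚ))⁻¹ := by
      rw [Nat.factorial_succ]
      push_cast
      have h0 : ((n:ℚ)+1) ≠ 0 := by positivity
      have h1 : ((n.factorial : ℕ):ℚ) ≠ 0 := by positivity
      field_simp
    rw [hq]
end

section
/- Let V be a vector space over ℚ, let D ≥ 1, and let W : Fin D → End(V) be linear endomorphisms satisfying W μ ∘ W ν + W ν ∘ W μ = 0 for all μ, ν. In the (ungraded) tensor product algebra Λ(ℝ^D) ⊗ End(V), where Λ(ℝ^D) is the exterior algebra of ℝ^D with standard basis e_1,…,e_D, set η := Σ_μ ι(e_μ) ⊗ W_μ (here ι is the canonical embedding of vectors into the exterior algebra). Then η^D * (1 ⊗ W_ν) = 0 for every ν. -/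
open TensorProduct

section aux

variable {R I : Type*} [Ring R] [DecidableEq I] (a : I → R)

omit [DecidableEq I] in
lemma stmt4_pairwise (hc : ∀ i j, Commute (a i) (a j)) (l : List I) :
    (l.map a).Pairwise Commute := by
  induction l with
  | nil => simp
  | cons j t ih =>
    rw [List.map_cons, List.pairwise_cons]
    refine ⟨fun x hx => ?_, ih⟩
    obtain ⟨i, _, rfl⟩ := List.mem_map.mp hx
    exact hc j i

lemma stmt4_prod_factor (hc : ∀ i j, Commute (a i) (a j)) {l : List I} {i : I}
    (hi : i ∈ l) :
    (l.map a).prod = ((l.erase i).map a).prod * a i := by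
  have h1 : List.Perm (l.map a) (((l.erase i).map a) ++ [a i]) := by
    refine ((List.perm_cons_erase hi).map a).trans ?_
    rw [List.map_cons]
    exact (List.perm_append_singleton _ _).symm
  rw [h1.prod_eq' (stmt4_pairwise a hc l), List.prod_append, List.prod_singleton]

lemma stmt4_prod_mul (hc : ∀ i j, Commute (a i) (a j)) (h2 : ∀ i, a i * a i = 0)
    {l : List I} {i : I} (hi : i ∈ l) :
    (l.map a).prod * a i = 0 := by
  rw [stmt4_prod_factor a hc hi, mul_assoc, h2, mul_zero]

lemma stmt4_prod_mul_sum (hc : ∀ i j, Commute (a i) (a j)) (h2 : ∀ i, a i * a i = 0)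
    (l : List I) :
    (l.map a).prod * (l.map a).sum = 0 := by
  have key : ∀ (m : List I), (∀ i ∈ m, i ∈ l) → (l.map a).prod * (m.map a).sum = 0 := by
    intro m
    induction m with
    | nil => simp
    | cons j t ih =>
      intro hm
      rw [List.map_cons, List.sum_cons, mul_add,
        stmt4_prod_mul a hc h2 (hm j (by simp)), ih (fun i hi => hm i (by simp [hi])),
        add_zero]
  exact key l (fun i hi => hi)

lemma stmt4_multinomial (hc : ∀ i j, Commute (a i) (a j)) (h2 : ∀ i, a i * a i = 0)
    (l : List I) :
    (l.map a).sum ^ l.length = (Nat.factorial l.length) • (l.map a).prod := by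
  induction l with
  | nil => simp
  | cons j t ih =>
    rw [List.map_cons, List.sum_cons, List.prod_cons, List.length_cons]
    set s : R := (t.map a).sum with hs
    set n : ℕ := t.length with hn
    have hcs : Commute (a j) s := Commute.list_sum_right _ _ (by
      intro x hx
      obtain ⟨i, _, rfl⟩ := List.mem_map.mp hx
      exact hc j i)
    have hpow2 : ∀ k, 2 ≤ k → a j ^ k = 0 := by
      intro k hk
      obtain ⟨m, rfl⟩ := Nat.exists_eq_add_of_le hk
      rw [pow_add, pow_two, h2, zero_mul]
    have hs1 : s ^ (n + 1) = 0 := by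
      rw [pow_succ, ih, smul_mul_assoc, stmt4_prod_mul_sum a hc h2, smul_zero]
    rw [hcs.add_pow]
    have hterms : ∀ k ∈ Finset.range (n + 1 + 1),
        a j ^ k * s ^ (n + 1 - k) * ((n + 1).choose k : R)
          = if k = 1 then (n + 1) • (a j * s ^ n) else 0 := by
      intro k hk
      rcases k with _ | _ | k
      · simp [hs1]
      · rw [if_pos rfl, pow_one, Nat.add_sub_cancel, Nat.choose_one_right,
          nsmul_eq_mul, ← (Nat.cast_commute (n + 1) (a j * s ^ n)).eq]
      · rw [hpow2 (k + 2) (by omega), zero_mul, zero_mul, if_neg (by omega)]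
    rw [Finset.sum_congr rfl hterms, Finset.sum_ite_eq' (Finset.range (n + 1 + 1)) 1,
      if_pos (Finset.mem_range.mpr (by omega)),
      ih, Nat.factorial_succ, mul_smul, mul_smul_comm, smul_comm]

end aux

/-- The exterior algebra `Λ(ℝ^D)` is a `ℚ`-algebra, by restriction of scalars along
`ℚ → ℝ`. -/
noncomputable instance stmt4_ratAlgebra (D : ℕ) :
    Algebra ℚ (ExteriorAlgebra ℝ (Fin D → ℝ)) :=
  Algebra.compHom (ExteriorAlgebra ℝ (Fin D → ℝ)) (algebraMap ℚ ℝ)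

set_option maxHeartbeats 1000000 in
set_option synthInstance.maxHeartbeats 400000 in
/-- If `W_1, …, W_D` are pairwise anticommuting endomorphisms of a `ℚ`-vector space `V`,
then in the tensor product algebra `Λ(ℝ^D) ⊗ End(V)` the element
`η = Σ_μ ι(e_μ) ⊗ W_μ` satisfies `η^D * (1 ⊗ W_ν) = 0` for every `ν`. -/
theorem stmt_4 (V : Type*) [AddCommGroup V] [Module ℚ V] (D : ℕ) (hD : 1 ≤ D)
    (W : Fin D → Module.End ℚ V)
    (hW : ∀ μ ν, W μ * W ν + W ν * W μ = 0) (ν : Fin D) :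
    (∑ μ : Fin D,
        (ExteriorAlgebra.ι ℝ (Pi.single μ (1 : ℝ)) ⊗ₜ[ℚ] W μ :
          ExteriorAlgebra ℝ (Fin D → ℝ) ⊗[ℚ] Module.End ℚ V)) ^ D *
      ((1 : ExteriorAlgebra ℝ (Fin D → ℝ)) ⊗ₜ[ℚ] W ν) = 0 := by
  have hWsq : ∀ μ, W μ * W μ = 0 := by
    intro μ
    have h : (2 : ℚ) • (W μ * W μ) = 0 := by rw [two_smul]; exact hW μ μ
    have h2 := congrArg (fun x => (2 : ℚ)⁻¹ • x) h
    simpa [smul_smul] using h2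
  let a : Fin D → ExteriorAlgebra ℝ (Fin D → ℝ) ⊗[ℚ] Module.End ℚ V :=
    fun μ => ExteriorAlgebra.ι ℝ (Pi.single μ (1 : ℝ)) ⊗ₜ[ℚ] W μ
  have hc : ∀ μ κ, Commute (a μ) (a κ) := by
    intro μ κ
    have h0 := ExteriorAlgebra.ι_add_mul_swap (R := ℝ) (M := Fin D → ℝ)
      (Pi.single μ (1 : ℝ)) (Pi.single κ (1 : ℝ))
    have he := eq_neg_of_add_eq_zero_left h0
    have hw : W μ * W κ = -(W κ * W μ) := eq_neg_of_add_eq_zero_left (hW μ κ)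
    show a μ * a κ = a κ * a μ
    simp only [a, Algebra.TensorProduct.tmul_mul_tmul]
    rw [he, hw, neg_tmul, tmul_neg, neg_neg]
  have h2 : ∀ μ, a μ * a μ = 0 := by
    intro μ
    show a μ * a μ = 0
    simp only [a, Algebra.TensorProduct.tmul_mul_tmul, ExteriorAlgebra.ι_sq_zero,
      zero_tmul]
  have key := stmt4_multinomial a hc h2 (List.finRange D)
  rw [List.length_finRange] at key
  have hsum : (∑ μ : Fin D,
      (ExteriorAlgebra.ι ℝ (Pi.single μ (1 : ℝ)) ⊗ₜ[ℚ] W μ :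
        ExteriorAlgebra ℝ (Fin D → ℝ) ⊗[ℚ] Module.End ℚ V))
      = ((List.finRange D).map a).sum := by
    rw [Fin.sum_univ_def]
  rw [hsum, key, smul_mul_assoc,
    stmt4_prod_factor a hc (List.mem_finRange ν), mul_assoc]
  have hz : a ν * ((1 : ExteriorAlgebra ℝ (Fin D → ℝ)) ⊗ₜ[ℚ] W ν) = 0 := by
    show (ExteriorAlgebra.ι ℝ (Pi.single ν (1 : ℝ)) ⊗ₜ[ℚ] W ν) *
      ((1 : ExteriorAlgebra ℝ (Fin D → ℝ)) ⊗ₜ[ℚ] W ν) = 0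
    rw [Algebra.TensorProduct.tmul_mul_tmul, mul_one, hWsq, tmul_zero]
  rw [hz, mul_zero, smul_zero]
end

section
/- Let N ≥ 1 and D ≥ 1, let V be the real vector space with basis {θ_{(i,μ)} : i ∈ Fin N, μ ∈ Fin D}, and let Λ = Λ(V) be its exterior algebra. For each (i,μ) let ∂_{(i,μ)} : Λ → Λ denote the interior product (left contraction) with the dual-basis functional of θ_{(i,μ)}, i.e. the unique odd derivation sending ι(θ_{(j,ν)}) to 1 if (j,ν) = (i,μ) and to 0 otherwise. If K ∈ Λ satisfies Σ_{i ∈ Fin N} ∂_{(i,μ)} K = 0 for every μ ∈ Fin D, then K belongs to the subalgebra of Λ generated by the elements ι(θ_{(i,μ)} − θ_{(0,μ)}) for i ≠ 0, μ ∈ Fin D. -/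
namespace SusyProofAux
set_option linter.unusedSectionVars false

variable {I : Type*} [DecidableEq I] {V : Type*} [AddCommGroup V] [Module ℝ V]

noncomputable def mon (b : Module.Basis I ℝ V) (l : List I) : ExteriorAlgebra ℝ V :=
  (l.map fun i => ExteriorAlgebra.ι ℝ (b i)).prod

lemma mon_nil (b : Module.Basis I ℝ V) : mon b ([] : List I) = 1 := rfl

lemma mon_cons (b : Module.Basis I ℝ V) (i : I) (l : List I) :
    mon b (i :: l) = ExteriorAlgebra.ι ℝ (b i) * mon b l := by
  simp [mon]

lemma mon_append (b : Module.Basis I ℝ V) (l l' : List I) :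
    mon b (l ++ l') = mon b l * mon b l' := by
  simp [mon]

def Sp (b : Module.Basis I ℝ V) (P : I → Prop) : Submodule ℝ (ExteriorAlgebra ℝ V) :=
  Submodule.span ℝ {x | ∃ l : List I, (∀ i ∈ l, P i) ∧ x = mon b l}

lemma mon_mem_sp {b : Module.Basis I ℝ V} {P : I → Prop} {l : List I} (hl : ∀ i ∈ l, P i) :
    mon b l ∈ Sp b P :=
  Submodule.subset_span ⟨l, hl, rfl⟩

lemma sp_mono {b : Module.Basis I ℝ V} {P Q : I → Prop} (h : ∀ i, P i → Q i) :
    Sp b P ≤ Sp b Q :=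
  Submodule.span_mono (by rintro x ⟨l, hl, rfl⟩; exact ⟨l, fun i hi => h i (hl i hi), rfl⟩)

lemma map_sp {b : Module.Basis I ℝ V} {P Q : I → Prop}
    {L : ExteriorAlgebra ℝ V →ₗ[ℝ] ExteriorAlgebra ℝ V}
    (h : ∀ l : List I, (∀ i ∈ l, P i) → L (mon b l) ∈ Sp b Q)
    {x} (hx : x ∈ Sp b P) : L x ∈ Sp b Q := by
  have hle : Sp b P ≤ (Sp b Q).comap L :=
    Submodule.span_le.mpr (by rintro y ⟨l, hl, rfl⟩; exact h l hl)
  exact hle hx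

lemma mul_mem_sp {b : Module.Basis I ℝ V} {P : I → Prop} {i : I} (hi : P i)
    {x} (hx : x ∈ Sp b P) : ExteriorAlgebra.ι ℝ (b i) * x ∈ Sp b P := by
  have := map_sp (L := LinearMap.mulLeft ℝ (ExteriorAlgebra.ι ℝ (b i)))
    (b := b) (P := P) (Q := P) ?_ hx
  · simpa using this
  · intro l hl
    simpa [LinearMap.mulLeft_apply, ← mon_cons] using
      mon_mem_sp (b := b) (P := P) (l := i :: l)
        (by rintro k hk; rcases List.mem_cons.mp hk with rfl | h; exacts [hi, hl k h])

noncomputable def dOp (b : Module.Basis I ℝ V) (j : I) :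
    ExteriorAlgebra ℝ V →ₗ[ℝ] ExteriorAlgebra ℝ V :=
  CliffordAlgebra.contractLeft (b.coord j)

lemma coord_basis (b : Module.Basis I ℝ V) (j i : I) :
    b.coord j (b i) = if i = j then (1:ℝ) else 0 := by
  rw [Module.Basis.coord_apply, Module.Basis.repr_self, Finsupp.single_apply]

lemma dOp_one (b : Module.Basis I ℝ V) (j : I) : dOp b j 1 = 0 :=
  CliffordAlgebra.contractLeft_one _ _

lemma dOp_ι_mul (b : Module.Basis I ℝ V) (j i : I) (x : ExteriorAlgebra ℝ V) :
    dOp b j (ExteriorAlgebra.ι ℝ (b i) * x)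
      = (if i = j then (1:ℝ) else 0) • x - ExteriorAlgebra.ι ℝ (b i) * dOp b j x := by
  rw [dOp, CliffordAlgebra.contractLeft_ι_mul, coord_basis]


lemma dOp_mon_not_mem (b : Module.Basis I ℝ V) {j : I} {l : List I} (hj : j ∉ l) :
    dOp b j (mon b l) = 0 := by
  induction l with
  | nil => exact dOp_one b j
  | cons i t ih =>
    have hij : i ≠ j := fun h => hj (h ▸ List.mem_cons_self (a := i) (l := t))
    rw [mon_cons, dOp_ι_mul, if_neg hij, zero_smul, zero_sub,
      ih (fun h => hj (List.mem_cons_of_mem i h)), mul_zero, neg_zero]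

lemma ι_swap (v w : V) :
    ExteriorAlgebra.ι ℝ v * ExteriorAlgebra.ι ℝ w
      = -(ExteriorAlgebra.ι ℝ w * ExteriorAlgebra.ι ℝ v) :=
  eq_neg_of_add_eq_zero_left (ExteriorAlgebra.ι_add_mul_swap v w)

lemma key (b : Module.Basis I ℝ V) {P : I → Prop} (j : I) :
    ∀ l : List I, (∀ i ∈ l, P i) →
      dOp b j (ExteriorAlgebra.ι ℝ (b j) * mon b l) ∈ Sp b (fun i => P i ∧ i ≠ j) := by
  intro l
  induction l with
  | nil =>
    intro _
    rw [mon_nil, mul_one]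
    have : dOp b j (ExteriorAlgebra.ι ℝ (b j) * 1)
        = (if j = j then (1:ℝ) else 0) • 1 - ExteriorAlgebra.ι ℝ (b j) * dOp b j 1 :=
      dOp_ι_mul b j j 1
    rw [mul_one] at this
    rw [this, if_pos rfl, one_smul, dOp_one, mul_zero, sub_zero]
    exact mon_mem_sp (l := []) (by simp)
  | cons i t ih =>
    intro hl
    have hPi : P i := hl i (List.mem_cons_self (a := i) (l := t))
    have hPt : ∀ k ∈ t, P k := fun k hk => hl k (List.mem_cons_of_mem i hk)
    by_cases hij : i = j
    · subst hij
      rw [mon_cons, ← mul_assoc, ExteriorAlgebra.ι_sq_zero, zero_mul, map_zero]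
      exact Submodule.zero_mem _
    · have e1 : dOp b j (ExteriorAlgebra.ι ℝ (b j) * mon b (i :: t))
          = ExteriorAlgebra.ι ℝ (b i) * dOp b j (ExteriorAlgebra.ι ℝ (b j) * mon b t) := by
        rw [mon_cons, dOp_ι_mul b j j, if_pos rfl, one_smul,
          dOp_ι_mul b j i, if_neg hij, zero_smul, zero_sub, mul_neg,
          dOp_ι_mul b j j, if_pos rfl, one_smul, mul_sub,
          sub_neg_eq_add, ← mul_assoc, ← mul_assoc, ι_swap (b j) (b i), neg_mul,
          ← sub_eq_add_neg]
      rw [e1]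
      exact mul_mem_sp ⟨hPi, hij⟩ (ih hPt)

lemma step (b : Module.Basis I ℝ V) {P : I → Prop} {j : I} {K : ExteriorAlgebra ℝ V}
    (hK : K ∈ Sp b P) (hd : dOp b j K = 0) :
    K ∈ Sp b (fun i => P i ∧ i ≠ j) := by
  have hKeq : dOp b j (ExteriorAlgebra.ι ℝ (b j) * K) = K := by
    rw [dOp_ι_mul, if_pos rfl, one_smul, hd, mul_zero, sub_zero]
  have := map_sp (L := (dOp b j).comp (LinearMap.mulLeft ℝ (ExteriorAlgebra.ι ℝ (b j))))
    (b := b) (P := P) (Q := fun i => P i ∧ i ≠ j)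
    (fun l hl => by simpa using key b j l hl) hK
  simpa [hKeq] using this

lemma sp_top [Fintype I] (b : Module.Basis I ℝ V) (K : ExteriorAlgebra ℝ V) :
    K ∈ Sp b (fun _ => True) := by
  induction K using ExteriorAlgebra.induction with
  | algebraMap r =>
    rw [Algebra.algebraMap_eq_smul_one]
    exact Submodule.smul_mem _ _ (mon_mem_sp (l := []) (by simp))
  | ι x =>
    rw [← Module.Basis.sum_repr b x, map_sum]
    refine Submodule.sum_mem _ (fun i _ => ?_)
    rw [map_smul]
    refine Submodule.smul_mem _ _ ?_
    have : ExteriorAlgebra.ι ℝ (b i) = mon b [i] := by simp [mon]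
    rw [this]
    exact mon_mem_sp (by simp)
  | mul a c ha hc =>
    have hmul : Sp b (fun _ => True) * Sp b (fun _ => True) ≤ Sp b (fun _ => True) := by
      rw [Sp, Submodule.span_mul_span]
      refine Submodule.span_le.mpr ?_
      rintro _ ⟨x, ⟨l, hl, rfl⟩, y, ⟨l', hl', rfl⟩, rfl⟩
      exact Submodule.subset_span ⟨l ++ l', by simp, (mon_append b l l').symm⟩
    exact hmul (Submodule.mul_mem_mul ha hc)
  | add a c ha hc => exact Submodule.add_mem _ ha hc

lemma core [Fintype I] (b : Module.Basis I ℝ V) (S : Finset I) :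
    ∀ K : ExteriorAlgebra ℝ V, (∀ j ∈ S, dOp b j K = 0) → K ∈ Sp b (fun i => i ∉ S) := by
  classical
  induction S using Finset.induction_on with
  | empty => intro K _; exact sp_mono (fun i _ => by simp) (sp_top b K)
  | @insert a s ha ih =>
    intro K hK
    have h1 := ih K (fun j hj => hK j (Finset.mem_insert_of_mem hj))
    have h2 := step b h1 (hK a (Finset.mem_insert_self a s))
    refine sp_mono (fun i hi => ?_) h2
    simp only [Finset.mem_insert, not_or]
    exact ⟨hi.2, hi.1⟩

lemma sp_le_adjoin (b : Module.Basis I ℝ V) (P : I → Prop) :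
    Sp b P ≤ Subalgebra.toSubmodule
      (Algebra.adjoin ℝ {x : ExteriorAlgebra ℝ V | ∃ i, P i ∧ x = ExteriorAlgebra.ι ℝ (b i)}) := by
  refine Submodule.span_le.mpr ?_
  rintro _ ⟨l, hl, rfl⟩
  induction l with
  | nil => exact Subalgebra.one_mem _
  | cons i t ih =>
    rw [mon_cons]
    exact Subalgebra.mul_mem _
      (Algebra.subset_adjoin ⟨i, hl i (List.mem_cons_self (a := i) (l := t)), rfl⟩)
      (ih (fun k hk => hl k (List.mem_cons_of_mem i hk)))

end SusyProofAux

/-- Supersymmetric kernels depend only on differences of Grassmann variables: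
let `Λ` be the exterior algebra on a real vector space with basis
`θ_(i,μ)`, `i ∈ Fin N`, `μ ∈ Fin D`, and let `∂_(i,μ)` be the interior product
(left contraction) with the dual basis functional of `θ_(i,μ)`.  If `K ∈ Λ`
satisfies `Σᵢ ∂_(i,μ) K = 0` for every `μ`, then `K` lies in the subalgebra
generated by the differences `ι(θ_(i,μ) − θ_(0,μ))`, `i ≠ 0`. -/
theorem stmt_8 (N D : ℕ) (hN : 1 ≤ N) (hD : 1 ≤ D)
    (V : Type*) [AddCommGroup V] [Module ℝ V]
    (θ : Module.Basis (Fin N × Fin D) ℝ V)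
    (K : ExteriorAlgebra ℝ V)
    (hK : ∀ μ : Fin D,
      ∑ i : Fin N, CliffordAlgebra.contractLeft (θ.coord (i, μ)) K = 0) :
    K ∈ Algebra.adjoin ℝ
      {x : ExteriorAlgebra ℝ V | ∃ (i : Fin N) (μ : Fin D), i ≠ (⟨0, hN⟩ : Fin N) ∧
        x = ExteriorAlgebra.ι ℝ (θ (i, μ) - θ ((⟨0, hN⟩ : Fin N), μ))} := by
  classical
  set z : Fin N := ⟨0, hN⟩ with hz
  set f : V →ₗ[ℝ] V :=
    θ.constr ℝ (fun p : Fin N × Fin D => if p.1 = z then θ p else θ p - θ (z, p.2)) with hfdef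
  set g : V →ₗ[ℝ] V :=
    θ.constr ℝ (fun p : Fin N × Fin D => if p.1 = z then θ p else θ p + θ (z, p.2)) with hgdef
  have hf : ∀ p, f (θ p) = if p.1 = z then θ p else θ p - θ (z, p.2) := fun p =>
    θ.constr_basis ℝ _ p
  have hg : ∀ p, g (θ p) = if p.1 = z then θ p else θ p + θ (z, p.2) := fun p =>
    θ.constr_basis ℝ _ p
  have hfg : f.comp g = LinearMap.id := by
    refine θ.ext fun p => ?_
    rw [LinearMap.comp_apply, LinearMap.id_apply, hg]
    by_cases hp : p.1 = z
    · rw [if_pos hp, hf, if_pos hp]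
    · rw [if_neg hp, map_add, hf p, if_neg hp, hf (z, p.2), if_pos rfl]
      abel
  have hgf : g.comp f = LinearMap.id := by
    refine θ.ext fun p => ?_
    rw [LinearMap.comp_apply, LinearMap.id_apply, hf]
    by_cases hp : p.1 = z
    · rw [if_pos hp, hg, if_pos hp]
    · rw [if_neg hp, map_sub, hg p, if_neg hp, hg (z, p.2), if_pos rfl]
      abel
  set e : V ≃ₗ[ℝ] V := LinearEquiv.ofLinear f g hfg hgf with hedef
  set b : Module.Basis (Fin N × Fin D) ℝ V := θ.map e with hbdef
  have hb : ∀ p, b p = if p.1 = z then θ p else θ p - θ (z, p.2) := by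
    intro p
    rw [hbdef, Module.Basis.map_apply, hedef, LinearEquiv.ofLinear_apply]
    exact hf p
  -- expressing θ in terms of b
  have hθb : ∀ p : Fin N × Fin D,
      θ p = if p.1 = z then b p else b p + b (z, p.2) := by
    intro p
    by_cases hp : p.1 = z
    · rw [if_pos hp, hb, if_pos hp]
    · rw [if_neg hp, hb p, if_neg hp, hb (z, p.2), if_pos rfl]
      abel
  -- the coordinate identity
  have hcoord : ∀ μ : Fin D, b.coord (z, μ) = ∑ i : Fin N, θ.coord (i, μ) := by
    intro μ
    refine θ.ext fun p => ?_
    obtain ⟨k, ν⟩ := p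
    have hRHS : (∑ i : Fin N, θ.coord (i, μ)) (θ (k, ν)) = if ν = μ then (1:ℝ) else 0 := by
      rw [LinearMap.sum_apply]
      simp only [Module.Basis.coord_apply, Module.Basis.repr_self, Finsupp.single_apply, Prod.mk.injEq]
      by_cases hν : ν = μ
      · simp only [hν, and_true]
        rw [Finset.sum_ite_eq Finset.univ k (fun _ => (1:ℝ))]
        simp
      · simp [hν]
    rw [hRHS]
    by_cases hk : k = z
    · subst hk
      have : θ (z, ν) = b (z, ν) := by rw [hb]; rfl
      rw [this, SusyProofAux.coord_basis]
      simp [Prod.ext_iff]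
    · have : θ (k, ν) = b (k, ν) + b (z, ν) := by
        rw [hθb (k, ν), if_neg hk]
      rw [this, map_add, SusyProofAux.coord_basis, SusyProofAux.coord_basis]
      have h1 : ¬ ((k, ν) = (z, μ)) := by simp [Prod.ext_iff, hk]
      rw [if_neg h1]
      simp [Prod.ext_iff]
  -- the transformed hypothesis
  have hd : ∀ μ : Fin D, SusyProofAux.dOp b (z, μ) K = 0 := by
    intro μ
    show CliffordAlgebra.contractLeft (b.coord (z, μ)) K = 0
    rw [hcoord μ, map_sum, LinearMap.sum_apply]
    exact hK μ
  set S : Finset (Fin N × Fin D) := Finset.univ.image (fun μ : Fin D => (z, μ)) with hSdef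
  have hcore : K ∈ SusyProofAux.Sp b (fun p => p ∉ S) := by
    refine SusyProofAux.core b S K ?_
    intro j hj
    obtain ⟨μ, _, rfl⟩ := Finset.mem_image.mp hj
    exact hd μ
  have hadj := SusyProofAux.sp_le_adjoin b (fun p => p ∉ S) hcore
  rw [Subalgebra.mem_toSubmodule] at hadj
  refine Algebra.adjoin_mono ?_ hadj
  rintro x ⟨p, hp, rfl⟩
  have hp1 : p.1 ≠ z := by
    intro h
    exact hp (Finset.mem_image.mpr ⟨p.2, Finset.mem_univ _, by rw [← h]⟩)
  refine ⟨p.1, p.2, hp1, ?_⟩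
  rw [hb p, if_neg hp1]
end

section
/- Let (C_p)_{p ≥ 0} be a family of modules over a commutative ring, with linear maps δ : C_p → C_p and d : C_p → C_{p+1} satisfying δ∘δ = 0, d∘d = 0, and δ∘d + d∘δ = 0. Assume the δ-cohomology is trivial in every positive degree: for each p ≥ 1, every x ∈ C_p with δx = 0 is of the form x = δy for some y ∈ C_p. If a family (ψ_p)_{0 ≤ p ≤ P} satisfies ψ_0 = 0 and δψ_p = dψ_{p−1} for 1 ≤ p ≤ P, then for every p with 1 ≤ p ≤ P there exist β_p ∈ C_p and γ_{p−1} ∈ C_{p−1} such that ψ_p = δβ_p + dγ_{p−1}. -/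
/-- Uniqueness of solutions of the descent equations: let `(C_p)` be a bicomplex
with `δ² = 0`, `d² = 0`, `δd + dδ = 0`, and suppose the `δ`-cohomology is trivial
in every positive degree.  If `ψ₀ = 0` and `δψ_p = dψ_{p−1}` for `1 ≤ p ≤ P`,
then every `ψ_p` (`1 ≤ p ≤ P`) is of the form `δβ + dγ`. -/
theorem stmt_9 (R : Type*) [CommRing R] (C : ℕ → Type*)
    [∀ p, AddCommGroup (C p)] [∀ p, Module R (C p)]
    (δ : ∀ p, C p →ₗ[R] C p) (d : ∀ p, C p →ₗ[R] C (p + 1))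
    (hδδ : ∀ p (x : C p), δ p (δ p x) = 0)
    (hdd : ∀ p (x : C p), d (p + 1) (d p x) = 0)
    (hanti : ∀ p (x : C p), δ (p + 1) (d p x) + d p (δ p x) = 0)
    (hcoh : ∀ p, 1 ≤ p → ∀ x : C p, δ p x = 0 → ∃ y : C p, x = δ p y)
    (P : ℕ) (ψ : ∀ p, C p) (h0 : ψ 0 = 0)
    (hdesc : ∀ p : ℕ, p + 1 ≤ P → δ (p + 1) (ψ (p + 1)) = d p (ψ p)) :
    ∀ p : ℕ, p + 1 ≤ P →
      ∃ (β : C (p + 1)) (γ : C p), ψ (p + 1) = δ (p + 1) β + d p γ := by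
  intro p
  induction p with
  | zero =>
    intro hP
    have h1 : δ 1 (ψ 1) = 0 := by
      rw [hdesc 0 hP, h0, map_zero]
    obtain ⟨y, hy⟩ := hcoh 1 le_rfl (ψ 1) h1
    exact ⟨y, 0, by rw [hy, map_zero, add_zero]⟩
  | succ p ih =>
    intro hP
    obtain ⟨β, γ, hβγ⟩ := ih (le_trans (Nat.le_succ _) hP)
    have hkey : δ (p + 2) (ψ (p + 2) + d (p + 1) β) = 0 := by
      have h1 : δ (p + 2) (ψ (p + 2)) = d (p + 1) (ψ (p + 1)) := hdesc (p + 1) hP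
      have h2 : δ (p + 2) (d (p + 1) β) = - d (p + 1) (δ (p + 1) β) := by
        exact eq_neg_of_add_eq_zero_left (hanti (p + 1) β)
      rw [map_add, h1, h2, hβγ, map_add, hdd p γ, add_zero]
      abel
    obtain ⟨y, hy⟩ := hcoh (p + 2) (by omega) _ hkey
    refine ⟨y, -β, ?_⟩
    rw [map_neg, ← hy]
    abel
end

section
/- Let A be a ring whose additive group has no 2-torsion (e.g. an algebra over ℚ), let N ≥ 1, and let c be an N×N matrix over A whose entries pairwise anticommute: c i j * c k l = −(c k l * c i j) for all indices i, j, k, l. Then for every m ≥ 1, the trace of c^(2m) is zero. -/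
set_option maxHeartbeats 1000000


/-- If the entries of a matrix `c` over a ring without additive `2`-torsion pairwise
anticommute, then the trace of every even power of `c` vanishes. -/
theorem stmt_10 (A : Type*) [Ring A] (htor : ∀ a : A, a + a = 0 → a = 0)
    (N : ℕ) (hN : 1 ≤ N) (c : Matrix (Fin N) (Fin N) A)
    (hc : ∀ i j k l, c i j * c k l = -(c k l * c i j)) :
    ∀ m : ℕ, 1 ≤ m → Matrix.trace (c ^ (2 * m)) = 0 := by
  -- entries of c anticommute (up to sign (-1)^n) with entries of c^n
  have key : ∀ n : ℕ, ∀ i j p q, c i j * (c ^ n) p q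
      = (-1 : A) ^ n * ((c ^ n) p q * c i j) := by
    intro n
    induction n with
    | zero =>
      intro i j p q
      simp [Matrix.one_apply]
    | succ n ih =>
      intro i j p q
      rw [pow_succ, Matrix.mul_apply]
      simp only [Finset.mul_sum, Finset.sum_mul]
      apply Finset.sum_congr rfl
      intro r _
      have h1 : c i j * ((c ^ n) p r * c r q)
          = (-1 : A) ^ n * ((c ^ n) p r * (c i j * c r q)) := by
        rw [← mul_assoc, ih i j p r, mul_assoc, mul_assoc]
      rw [h1, hc i j r q, pow_add, pow_one]
      simp [mul_neg, neg_mul, mul_assoc]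
  intro m hm
  obtain ⟨k, hk⟩ : ∃ k, 2 * m = k + 1 := ⟨2 * m - 1, by omega⟩
  have hkodd : Odd k := ⟨m - 1, by omega⟩
  have hsign : (-1 : A) ^ k = -1 := hkodd.neg_one_pow
  set T := Matrix.trace (c ^ (2 * m)) with hT
  have e1 : T = Matrix.trace (c * c ^ k) := by
    rw [hT, hk, pow_succ']
  have lhs : Matrix.trace (c * c ^ k) = ∑ i, ∑ j, -((c ^ k) j i * c i j) := by
    simp only [Matrix.trace, Matrix.diag_apply, Matrix.mul_apply]
    exact Finset.sum_congr rfl fun i _ => Finset.sum_congr rfl fun j _ => by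
      rw [key k i j j i, hsign, neg_one_mul]
  have rhs : Matrix.trace (c ^ k * c) = ∑ i, ∑ j, (c ^ k) j i * c i j := by
    simp only [Matrix.trace, Matrix.diag_apply, Matrix.mul_apply]
    rw [Finset.sum_comm]
  have e2 : Matrix.trace (c * c ^ k) = - Matrix.trace (c ^ k * c) := by
    rw [lhs, rhs]
    simp [Finset.sum_neg_distrib]
  have e3 : Matrix.trace (c ^ k * c) = Matrix.trace (c * c ^ k) := by
    rw [← pow_succ, ← pow_succ']
  have hTT : T = -T := by
    calc T = Matrix.trace (c * c ^ k) := e1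
    _ = -Matrix.trace (c ^ k * c) := e2
    _ = -Matrix.trace (c * c ^ k) := by rw [e3]
    _ = -T := by rw [← e1]
  exact htor T (add_eq_zero_iff_eq_neg.mpr hTT)
end

section
/- Let R be a commutative ℚ-algebra, N ≥ 1, D ≥ 1, and let P be a multivariate polynomial over R in the variables X_{(i,μ)}, i ∈ Fin N, μ ∈ Fin D. If for every μ ∈ Fin D the sum of partial derivatives Σ_{i ∈ Fin N} ∂P/∂X_{(i,μ)} vanishes, then P lies in the R-subalgebra generated by the differences X_{(i,μ)} − X_{(0,μ)}, i ∈ Fin N, μ ∈ Fin D. -/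
open MvPolynomial

/-- Over a `ℚ`-algebra, if a partial derivative of a polynomial vanishes, the
corresponding variable does not occur in the polynomial. -/
lemma pderiv_eq_zero_notMem_vars {R : Type*} [CommRing R] [Algebra ℚ R]
    {σ : Type*} [DecidableEq σ] (v : σ) (Q : MvPolynomial σ R)
    (h : MvPolynomial.pderiv v Q = 0) : v ∉ Q.vars := by
  intro hv
  rw [MvPolynomial.mem_vars] at hv
  obtain ⟨m, hm, hvm⟩ := hv
  rw [Finsupp.mem_support_iff] at hvm
  have hle : Finsupp.single v 1 ≤ m := by
    rw [Finsupp.single_le_iff]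
    omega
  have hco : MvPolynomial.coeff (m - Finsupp.single v 1) (MvPolynomial.pderiv v Q)
      = Q.coeff m * (m v : R) := by
    conv_lhs => rw [Q.as_sum]
    rw [map_sum, MvPolynomial.coeff_sum]
    rw [Finset.sum_eq_single m]
    · rw [MvPolynomial.pderiv_monomial, MvPolynomial.coeff_monomial, if_pos rfl]
    · intro m' hm' hne
      rw [MvPolynomial.pderiv_monomial, MvPolynomial.coeff_monomial]
      by_cases h0 : m' v = 0
      · simp [h0]
      · have hle' : Finsupp.single v 1 ≤ m' := by
          rw [Finsupp.single_le_iff]; omega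
        rw [if_neg, ]
        intro heq
        apply hne
        have := congrArg (· + Finsupp.single v 1) heq
        simpa [tsub_add_cancel_of_le hle, tsub_add_cancel_of_le hle'] using this
    · intro hms
      exact absurd hm hms
  rw [h] at hco
  simp only [MvPolynomial.coeff_zero] at hco
  have hcm : Q.coeff m = 0 := by
    have hnz : ((m v : ℚ)) ≠ 0 := by exact_mod_cast hvm
    have : Q.coeff m * algebraMap ℚ R (m v) = 0 := by
      rw [show ((algebraMap ℚ R) (m v)) = ((m v : R)) by
        simp [map_natCast]]
      exact hco.symm ▸ hco
    calc Q.coeff m = Q.coeff m * algebraMap ℚ R (m v) * algebraMap ℚ R ((m v : ℚ)⁻¹) := by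
          rw [mul_assoc, ← map_mul, mul_inv_cancel₀ hnz, map_one, mul_one]
      _ = 0 := by rw [this, zero_mul]
  rw [MvPolynomial.mem_support_iff] at hm
  exact hm hcm

/-- A multivariate polynomial over a commutative `ℚ`-algebra in variables
`X_(i,μ)`, `i ∈ Fin N`, `μ ∈ Fin D`, which is annihilated by each total derivative
`Σ_i ∂/∂X_(i,μ)`, lies in the subalgebra generated by the differences
`X_(i,μ) − X_(0,μ)`. -/
theorem stmt_15 (R : Type*) [CommRing R] [Algebra ℚ R] (N D : ℕ) (hN : 1 ≤ N) (hD : 1 ≤ D)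
    (P : MvPolynomial (Fin N × Fin D) R)
    (hP : ∀ μ : Fin D, ∑ i : Fin N, MvPolynomial.pderiv (i, μ) P = 0) :
    P ∈ Algebra.adjoin R
      {q : MvPolynomial (Fin N × Fin D) R | ∃ (i : Fin N) (μ : Fin D),
        q = MvPolynomial.X (i, μ) - MvPolynomial.X ((⟨0, hN⟩ : Fin N), μ)} := by
  classical
  set z : Fin N := ⟨0, hN⟩ with hz
  set T : MvPolynomial (Fin N × Fin D) R →ₐ[R] MvPolynomial (Fin N × Fin D) R :=
    aeval (fun j => if j.1 = z then X j else X j + X (z, j.2)) with hT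
  set S : MvPolynomial (Fin N × Fin D) R →ₐ[R] MvPolynomial (Fin N × Fin D) R :=
    aeval (fun j => if j.1 = z then X j else X j - X (z, j.2)) with hS
  have hST : ∀ p, S (T p) = p := by
    intro p
    have : S.comp T = AlgHom.id R _ := by
      apply MvPolynomial.algHom_ext
      intro j
      by_cases hj : j.1 = z <;>
        simp [hT, hS, hj]
    calc S (T p) = (S.comp T) p := rfl
      _ = p := by rw [this]; rfl
  -- chain rule: key X-case
  have hXcase : ∀ (μ : Fin D) (j : Fin N × Fin D),
      pderiv (z, μ) (T (X j)) = T (∑ i : Fin N, pderiv (i, μ) (X j)) := by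
    intro μ j
    have hsum : (∑ i : Fin N, pderiv (i, μ) (X j : MvPolynomial (Fin N × Fin D) R))
        = if μ = j.2 then 1 else 0 := by
      rw [Finset.sum_eq_single j.1]
      · by_cases hμ : μ = j.2
        · rw [if_pos hμ]
          subst hμ
          exact pderiv_X_self j
        · rw [if_neg hμ]
          apply pderiv_X_of_ne
          intro hc
          exact hμ (congrArg Prod.snd hc).symm
      · intro i _ hi
        apply pderiv_X_of_ne
        intro hc
        exact hi (congrArg Prod.fst hc).symm
      · intro h; exact absurd (Finset.mem_univ _) h
    rw [hsum]
    by_cases hj : j.1 = z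
    · have hTX : T (X j) = X j := by simp [hT, hj]
      rw [hTX]
      by_cases hμ : μ = j.2
      · have : j = (z, μ) := by
          subst hμ; exact Prod.ext hj rfl
        rw [this, if_pos rfl]
        simp [pderiv_X_self]
      · rw [if_neg hμ]
        rw [pderiv_X_of_ne]
        · simp
        · intro hc
          exact hμ (congrArg Prod.snd hc).symm
    · have hTX : T (X j) = X j + X (z, j.2) := by simp [hT, hj]
      rw [hTX, map_add]
      rw [pderiv_X_of_ne (by intro hc; exact hj (congrArg Prod.fst hc))]
      by_cases hμ : μ = j.2
      · subst hμ
        rw [if_pos rfl, pderiv_X_self]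
        simp
      · rw [pderiv_X_of_ne (by intro hc; exact hμ (congrArg Prod.snd hc).symm)]
        rw [if_neg hμ]
        simp
  have hchain : ∀ (μ : Fin D) (p : MvPolynomial (Fin N × Fin D) R),
      pderiv (z, μ) (T p) = T (∑ i : Fin N, pderiv (i, μ) p) := by
    intro μ p
    induction p using MvPolynomial.induction_on with
    | C a => simp
    | add p q hp hq =>
        have hsum : (∑ i : Fin N, pderiv (i, μ) (p + q))
            = (∑ i : Fin N, pderiv (i, μ) p) + ∑ i : Fin N, pderiv (i, μ) q := by
          rw [← Finset.sum_add_distrib]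
          exact Finset.sum_congr rfl fun i _ => map_add _ _ _
        rw [map_add, map_add, hp, hq, hsum, map_add]
    | mul_X p j hp =>
        rw [map_mul, pderiv_mul, hp, hXcase μ j]
        rw [show (∑ i : Fin N, pderiv (i, μ) (p * X j))
            = (∑ i : Fin N, pderiv (i, μ) p) * X j + p * (∑ i : Fin N, pderiv (i, μ) (X j)) by
          rw [Finset.sum_mul, Finset.mul_sum, ← Finset.sum_add_distrib]
          apply Finset.sum_congr rfl
          intros; rw [pderiv_mul]]
        rw [map_add, map_mul, map_mul]
  -- Q has no variables (z, μ)
  set Q := T P with hQdef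
  have hQvars : (Q.vars : Set (Fin N × Fin D)) ⊆ {j | j.1 ≠ z} := by
    intro j hj hjz
    have hj' : j = (z, j.2) := Prod.ext hjz rfl
    have : pderiv (z, j.2) Q = 0 := by
      rw [hQdef, hchain, hP, map_zero]
    exact pderiv_eq_zero_notMem_vars (z, j.2) Q this (hj' ▸ hj)
  have hQsupp : Q ∈ MvPolynomial.supported R {j : Fin N × Fin D | j.1 ≠ z} :=
    (MvPolynomial.mem_supported).mpr hQvars
  rw [MvPolynomial.supported_eq_adjoin_X] at hQsupp
  have hPSQ : P = S Q := (hST P).symm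
  have hmem : S Q ∈ (Algebra.adjoin R (X '' {j : Fin N × Fin D | j.1 ≠ z})).map S :=
    Subalgebra.mem_map.mpr ⟨Q, hQsupp, rfl⟩
  rw [AlgHom.map_adjoin] at hmem
  rw [hPSQ]
  refine Algebra.adjoin_mono ?_ hmem
  rintro q ⟨_, ⟨j, hj, rfl⟩, rfl⟩
  have hj' : j.1 ≠ z := hj
  exact ⟨j.1, j.2, by simp [hS, hj']⟩
end
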